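/- Let ζ = exp(2πi/5) and φ = (1+√5)/2. Then D₂(ζ) + 2·D₂(ζ²) = 2·D₂(φ·ζ). (This is the Bloch–Wigner identity underlying the scissors-congruence computation N₁ ≡ ±10[ζφ] of §6 of the paper, which evaluates the limiting regulator of the coordinate symbol at the first node of the conifold curve.) -/

import Mathlib

/-!
The Bloch–Wigner function is odd under `z ↦ conj z` and under `z ↦ z / (z - 1)`, and satisfies
the duplication relation `D₂(z²) = 2 (D₂(z) + D₂(-z))`. These come from the corresponding
identities for `Li₂`: reflection is immediate from the integral, while the Landen and duplication
identities are proved by differentiating along the segment from `0` to `z`, on which the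
hypotheses keep every logarithm off its branch cut.

With `ω = exp(πi/5)` one has `ζ = ω²`, `conj(ζ²) = -ω` and `φζ = 1 / (1 - ω) = ω̄ / (ω̄ - 1)`
(the latter because `φ = ω + ω̄` and `ω⁴ - ω³ + ω² - ω + 1 = 0`). Hence `D₂(φζ) = -D₂(ω̄) = D₂(ω)`
and `D₂(-ω) = -D₂(ζ²)`, and duplication at `ω` gives `D₂(ζ) = 2 D₂(φζ) - 2 D₂(ζ²)`.
-/

/-- The dilogarithm Li₂(z) = −∫₀¹ Log(1−z·t)/t dt, with the principal branch Log. -/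
noncomputable def Li2 (z : ℂ) : ℂ :=
  -∫ t in (0 : ℝ)..(1 : ℝ), Complex.log (1 - z * (t : ℂ)) / (t : ℂ)

/-- The Bloch–Wigner function D₂(z) = Im(Li₂(z)) + arg(1−z)·log|z|. -/
noncomputable def D2 (z : ℂ) : ℝ :=
  (Li2 z).im + Complex.arg (1 - z) * Real.log ‖z‖

/-- ζ = exp(2πi/5). -/
noncomputable def ζ5 : ℂ := Complex.exp (2 * Real.pi * Complex.I / 5)

/-- The golden ratio φ = (1+√5)/2, as a complex number. -/
noncomputable def goldφ : ℂ := (((1 + Real.sqrt 5) / 2 : ℝ) : ℂ)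

open Complex Set Metric MeasureTheory intervalIntegral
open scoped ComplexConjugate

lemma one_sub_mul_ofReal_mem_slitPlane {w : ℂ} (hw : 1 - w ∈ slitPlane) {t : ℝ}
    (ht : t ∈ Icc (0 : ℝ) 1) : 1 - w * t ∈ slitPlane := by
  convert starConvex_one_slitPlane.add_smul_mem (y := -w) (by rwa [← sub_eq_add_neg]) ht.1 ht.2
    using 1
  rw [real_smul]
  ring

lemma one_sub_mem_slitPlane_of_im_ne_zero {z : ℂ} (hz : z.im ≠ 0) : 1 - z ∈ slitPlane :=
  mem_slitPlane_iff.2 (Or.inr (by simpa using hz))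

lemma mem_slitPlane_of_re_pos {a : ℂ} (ha : 0 < a.re) : a ∈ slitPlane :=
  mem_slitPlane_iff.2 (Or.inl ha)

lemma inv_mem_slitPlane {z : ℂ} (hz : z ∈ slitPlane) : z⁻¹ ∈ slitPlane := by
  rw [mem_slitPlane_iff_arg] at hz ⊢
  rw [arg_inv, if_neg hz.1]
  refine ⟨fun h => (neg_pi_lt_arg z).ne ?_, inv_ne_zero hz.2⟩
  linarith

lemma arg_add_arg_mem_Ioo_of_re_pos {a b : ℂ} (ha : 0 < a.re) (hb : 0 < b.re) :
    arg a + arg b ∈ Ioo (-Real.pi) Real.pi := by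
  have ha' := abs_lt.1 (abs_arg_lt_pi_div_two_iff.2 (Or.inl ha))
  have hb' := abs_lt.1 (abs_arg_lt_pi_div_two_iff.2 (Or.inl hb))
  constructor <;> linarith [ha'.1, ha'.2, hb'.1, hb'.2]

lemma mul_mem_slitPlane_of_re_pos {a b : ℂ} (ha : 0 < a.re) (hb : 0 < b.re) :
    a * b ∈ slitPlane := by
  have h := arg_add_arg_mem_Ioo_of_re_pos ha hb
  rw [mem_slitPlane_iff_arg, arg_mul (ne_zero_of_re_pos ha) (ne_zero_of_re_pos hb)
    (Ioo_subset_Ioc_self h)]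
  exact ⟨h.2.ne, mul_ne_zero (ne_zero_of_re_pos ha) (ne_zero_of_re_pos hb)⟩

lemma log_mul_of_re_pos {a b : ℂ} (ha : 0 < a.re) (hb : 0 < b.re) :
    log (a * b) = log a + log b :=
  log_mul (ne_zero_of_re_pos ha) (ne_zero_of_re_pos hb)
    (Ioo_subset_Ioc_self (arg_add_arg_mem_Ioo_of_re_pos ha hb))

lemma re_one_sub_pos_of_abs_re_lt_one {u : ℂ} (hu : |u.re| < 1) : 0 < (1 - u).re := by
  rw [sub_re, one_re]
  linarith [(abs_lt.1 hu).2]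

lemma one_sub_div_sub_one {c : ℂ} (hc : c ≠ 1) : 1 - c / (c - 1) = (1 - c)⁻¹ := by
  have h₁ : c - 1 ≠ 0 := sub_ne_zero.2 hc
  have h₂ : 1 - c ≠ 0 := sub_ne_zero.2 hc.symm
  field_simp
  ring

lemma exists_bound_inv_one_sub_mul {w : ℂ} (hw : 1 - w ∈ slitPlane) :
    ∃ r > 0, ∃ C, ∀ x ∈ closedBall w r,
      1 - x ∈ slitPlane ∧ ∀ t ∈ Icc (0 : ℝ) 1, ‖(1 - x * t)⁻¹‖ ≤ C := by
  obtain ⟨r, hr, hball⟩ := nhds_basis_closedBall.mem_iff.1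
    ((isOpen_slitPlane.preimage (continuous_const.sub continuous_id)).mem_nhds hw)
  obtain ⟨C, hC⟩ := ((isCompact_closedBall w r).prod isCompact_Icc).exists_bound_of_continuousOn
    (f := fun p : ℂ × ℝ => (1 - p.1 * p.2)⁻¹) <| ContinuousOn.inv₀ (by fun_prop)
      fun p hp => slitPlane_ne_zero (one_sub_mul_ofReal_mem_slitPlane (hball hp.1) hp.2)
  exact ⟨r, hr, C, fun x hx => ⟨hball hx, fun t ht => hC (x, t) ⟨hx, ht⟩⟩⟩

lemma hasDerivAt_log_one_sub_mul_ofReal {w : ℂ} {t : ℝ} (h : 1 - w * t ∈ slitPlane) :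
    HasDerivAt (fun s : ℝ => log (1 - w * s)) (-w / (1 - w * t)) t := by
  have hlin : HasDerivAt (fun z : ℂ => 1 - w * z) (-w) t := by
    simpa using ((hasDerivAt_id (t : ℂ)).const_mul w).const_sub 1
  rw [div_eq_inv_mul]
  exact ((hasDerivAt_log h).comp (t : ℂ) hlin).comp_ofReal

lemma norm_log_one_sub_mul_le {w : ℂ} {C : ℝ} (hw : 1 - w ∈ slitPlane)
    (hC : ∀ t ∈ Icc (0 : ℝ) 1, ‖(1 - w * t)⁻¹‖ ≤ C) {t : ℝ} (ht : t ∈ Icc (0 : ℝ) 1) :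
    ‖log (1 - w * t)‖ ≤ C * ‖w‖ * t := by
  have := (convex_Icc (0 : ℝ) 1).norm_image_sub_le_of_norm_hasDerivWithin_le (C := C * ‖w‖)
    (fun s hs => (hasDerivAt_log_one_sub_mul_ofReal
      (one_sub_mul_ofReal_mem_slitPlane hw hs)).hasDerivWithinAt)
    (fun s hs => ?_) (left_mem_Icc.2 zero_le_one) ht
  · simpa [abs_of_nonneg ht.1] using this
  · rw [neg_div, norm_neg, div_eq_mul_inv, norm_mul, mul_comm]
    exact mul_le_mul_of_nonneg_right (hC s hs) (norm_nonneg w)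

lemma intervalIntegrable_log_one_sub_mul_div {w : ℂ} (hw : 1 - w ∈ slitPlane) :
    IntervalIntegrable (fun t : ℝ => log (1 - w * t) / t) volume 0 1 := by
  obtain ⟨r, hr, C, hC⟩ := exists_bound_inv_one_sub_mul hw
  refine IntervalIntegrable.mono_fun' (g := fun _ => C * ‖w‖) intervalIntegrable_const
    (Measurable.aestronglyMeasurable (by fun_prop)) ?_
  rw [uIoc_of_le zero_le_one]
  refine (ae_restrict_iff' measurableSet_Ioc).2 (.of_forall fun t ht => ?_)
  dsimp only
  rw [norm_div, norm_real, Real.norm_of_nonneg ht.1.le, div_le_iff₀ ht.1]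
  exact norm_log_one_sub_mul_le hw (hC w (mem_closedBall_self hr.le)).2 (Ioc_subset_Icc_self ht)

lemma hasDerivAt_Li2_integral {w : ℂ} (hw : 1 - w ∈ slitPlane) :
    HasDerivAt Li2 (∫ t in (0 : ℝ)..1, (1 - w * t)⁻¹) w := by
  obtain ⟨r, hr, C, hC⟩ := exists_bound_inv_one_sub_mul hw
  have hIoc : ∀ t ∈ uIoc (0 : ℝ) 1, t ∈ Icc (0 : ℝ) 1 ∧ t ≠ 0 := fun t ht => by
    rw [uIoc_of_le zero_le_one] at ht
    exact ⟨Ioc_subset_Icc_self ht, ht.1.ne'⟩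
  have key := hasDerivAt_integral_of_dominated_loc_of_deriv_le
    (F := fun (x : ℂ) (t : ℝ) => log (1 - x * t) / t) (F' := fun x t => -(1 - x * t)⁻¹)
    (bound := fun _ => C) (ball_mem_nhds w hr)
    (.of_forall fun x => Measurable.aestronglyMeasurable (by fun_prop))
    (intervalIntegrable_log_one_sub_mul_div hw)
    (Measurable.aestronglyMeasurable (by fun_prop))
    (.of_forall fun t ht x hx => by
      rw [norm_neg]; exact (hC x (ball_subset_closedBall hx)).2 t (hIoc t ht).1)
    intervalIntegrable_const
    (.of_forall fun t ht x hx => by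
      obtain ⟨ht01, ht0⟩ := hIoc t ht
      have hslit := one_sub_mul_ofReal_mem_slitPlane (hC x (ball_subset_closedBall hx)).1 ht01
      have hlin : HasDerivAt (fun x : ℂ => 1 - x * t) (-t) x := by
        simpa using ((hasDerivAt_id x).mul_const (t : ℂ)).const_sub 1
      refine (((hasDerivAt_log hslit).comp x hlin).div_const (t : ℂ)).congr_deriv ?_
      rw [mul_neg, neg_div, mul_div_cancel_right₀ _ (ofReal_ne_zero.2 ht0)])
  have h := key.2.neg
  simp only [← intervalIntegral.integral_neg, neg_neg] at h
  exact h

lemma hasDerivAt_Li2 {w : ℂ} (hw : 1 - w ∈ slitPlane) (hw0 : w ≠ 0) :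
    HasDerivAt Li2 (-log (1 - w) / w) w := by
  have h := log_inv_eq_integral hw
  rw [log_inv _ (slitPlane_arg_ne_pi hw)] at h
  simp_rw [real_smul, mul_comm _ w] at h
  convert hasDerivAt_Li2_integral hw using 1
  rw [h, mul_div_cancel_left₀ _ hw0]

lemma differentiableAt_Li2 {w : ℂ} (hw : 1 - w ∈ slitPlane) : DifferentiableAt ℂ Li2 w :=
  (hasDerivAt_Li2_integral hw).differentiableAt

@[simp] lemma Li2_zero : Li2 0 = 0 := by simp [Li2]

section Comp

variable {f : ℝ → ℂ} {x : ℝ}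

lemma ContinuousAt.Li2 (hf : ContinuousAt f x) (h : 1 - f x ∈ slitPlane) :
    ContinuousAt (fun t => Li2 (f t)) x :=
  (differentiableAt_Li2 h).continuousAt.comp hf

lemma HasDerivAt.Li2 {f' : ℂ} (hf : HasDerivAt f f' x) (h : 1 - f x ∈ slitPlane) (h0 : f x ≠ 0) :
    HasDerivAt (fun t => Li2 (f t)) (-Complex.log (1 - f x) / f x * f') x :=
  (hasDerivAt_Li2 h h0).comp x hf

end Comp

lemma hasDerivAt_mul_ofReal (w : ℂ) (x : ℝ) : HasDerivAt (fun t : ℝ => w * t) w x := by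
  simpa using ((hasDerivAt_id (x : ℂ)).const_mul w).comp_ofReal

lemma eq_of_hasDerivAt_zero {E : Type*} [NormedAddCommGroup E] [NormedSpace ℝ E] [CompleteSpace E]
    {G : ℝ → E} {a b : ℝ} (hab : a ≤ b) (hcont : ContinuousOn G (Icc a b))
    (hderiv : ∀ x ∈ Ioo a b, HasDerivAt G 0 x) : G b = G a := by
  simpa [sub_eq_zero, eq_comm] using
    integral_eq_sub_of_hasDerivAt_of_le hab hcont hderiv intervalIntegrable_const

theorem Li2_conj {z : ℂ} (hz : 1 - z ∈ slitPlane) : Li2 (conj z) = conj (Li2 z) := by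
  have h : EqOn (fun t : ℝ => log (1 - conj z * t) / t) (fun t => conj (log (1 - z * t) / t))
      (uIcc 0 1) := fun t ht => by
    rw [uIcc_of_le zero_le_one] at ht
    have harg := slitPlane_arg_ne_pi (one_sub_mul_ofReal_mem_slitPlane hz ht)
    simp only [map_div₀, conj_ofReal, ← log_conj _ harg, map_sub, map_one, map_mul]
  rw [Li2, Li2, integral_congr h, integral_of_le zero_le_one, integral_of_le zero_le_one,
    integral_conj, map_neg]

theorem Li2_add_Li2_neg {z : ℂ} (hz : |z.re| < 1) : Li2 z + Li2 (-z) = Li2 (z ^ 2) / 2 := by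
  rcases eq_or_ne z 0 with rfl | hz0
  · simp
  have hre : ∀ x ∈ Icc (0 : ℝ) 1, 0 < (1 - z * x).re ∧ 0 < (1 - -(z * x)).re := fun x hx => by
    have hzx : |(z * x).re| < 1 := by
      rw [re_mul_ofReal, abs_mul, abs_of_nonneg hx.1]
      exact lt_of_le_of_lt (mul_le_of_le_one_right (abs_nonneg _) hx.2) hz
    exact ⟨re_one_sub_pos_of_abs_re_lt_one hzx,
      re_one_sub_pos_of_abs_re_lt_one (by rwa [neg_re, abs_neg])⟩
  have hsq : ∀ u : ℂ, 1 - u ^ 2 = (1 - u) * (1 - -u) := fun u => by ring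
  have hsq_mem : ∀ x ∈ Icc (0 : ℝ) 1, 1 - (z * x) ^ 2 ∈ slitPlane := fun x hx => by
    rw [hsq]; exact mul_mem_slitPlane_of_re_pos (hre x hx).1 (hre x hx).2
  let G : ℝ → ℂ := fun x => Li2 (z * x) + Li2 (-(z * x)) - Li2 ((z * x) ^ 2) / 2
  have hcont : ∀ x ∈ Icc (0 : ℝ) 1, ContinuousAt G x := fun x hx => by
    have hlin : Continuous fun t : ℝ => z * t := by fun_prop
    have h₁ := hlin.continuousAt.Li2 (mem_slitPlane_of_re_pos (hre x hx).1)
    have h₂ := hlin.neg.continuousAt.Li2 (mem_slitPlane_of_re_pos (hre x hx).2)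
    have h₃ := (hlin.pow 2).continuousAt.Li2 (hsq_mem x hx)
    exact (h₁.add h₂).sub (h₃.div_const 2)
  have hderiv : ∀ x ∈ Ioo (0 : ℝ) 1, HasDerivAt G 0 x := fun x hx => by
    have hx' := Ioo_subset_Icc_self hx
    have hu0 : z * x ≠ 0 := mul_ne_zero hz0 (ofReal_ne_zero.2 hx.1.ne')
    have hlin := hasDerivAt_mul_ofReal z x
    have h₁ := hlin.Li2 (mem_slitPlane_of_re_pos (hre x hx').1) hu0
    have h₂ := hlin.fun_neg.Li2 (mem_slitPlane_of_re_pos (hre x hx').2) (neg_ne_zero.2 hu0)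
    have h₃ := (hlin.fun_pow 2).Li2 (hsq_mem x hx') (pow_ne_zero 2 hu0)
    refine ((h₁.add h₂).sub (h₃.div_const 2)).congr_deriv ?_
    rw [hsq, log_mul_of_re_pos (hre x hx').1 (hre x hx').2]
    field_simp
    ring
  simpa [G, sub_eq_zero] using
    eq_of_hasDerivAt_zero zero_le_one (fun x hx => (hcont x hx).continuousWithinAt) hderiv

theorem Li2_div_sub_one {c : ℂ} (hc : 1 - c ∈ slitPlane) :
    Li2 (c / (c - 1)) = -Li2 c - log (1 - c) ^ 2 / 2 := by
  rcases eq_or_ne c 0 with rfl | hc0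
  · simp
  have hu : ∀ x ∈ Icc (0 : ℝ) 1, 1 - c * x ∈ slitPlane := fun x hx =>
    one_sub_mul_ofReal_mem_slitPlane hc hx
  have hne : ∀ x ∈ Icc (0 : ℝ) 1, c * x ≠ 1 := fun x hx h =>
    slitPlane_ne_zero (hu x hx) (by rw [h, sub_self])
  have hden : ∀ x ∈ Icc (0 : ℝ) 1, c * x - 1 ≠ 0 := fun x hx => sub_ne_zero.2 (hne x hx)
  have hg : ∀ x ∈ Icc (0 : ℝ) 1, 1 - c * x / (c * x - 1) = (1 - c * x)⁻¹ := fun x hx =>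
    one_sub_div_sub_one (hne x hx)
  have hg_mem : ∀ x ∈ Icc (0 : ℝ) 1, 1 - c * x / (c * x - 1) ∈ slitPlane := fun x hx => by
    rw [hg x hx]; exact inv_mem_slitPlane (hu x hx)
  let G : ℝ → ℂ := fun x => Li2 (c * x / (c * x - 1)) + Li2 (c * x) + log (1 - c * x) ^ 2 / 2
  have hcont : ∀ x ∈ Icc (0 : ℝ) 1, ContinuousAt G x := fun x hx => by
    have hlin : Continuous fun t : ℝ => c * t := by fun_prop
    have h₁ := (hlin.continuousAt.div (hlin.sub continuous_const).continuousAt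
      (hden x hx)).Li2 (hg_mem x hx)
    have h₂ := hlin.continuousAt.Li2 (hu x hx)
    have h₃ := (continuous_const.sub hlin).continuousAt.clog (hu x hx)
    exact (h₁.add h₂).add ((h₃.pow 2).div_const 2)
  have hderiv : ∀ x ∈ Ioo (0 : ℝ) 1, HasDerivAt G 0 x := fun x hx => by
    have hx' := Ioo_subset_Icc_self hx
    have hu0 : c * x ≠ 0 := mul_ne_zero hc0 (ofReal_ne_zero.2 hx.1.ne')
    have hlin := hasDerivAt_mul_ofReal c x
    have h₁ := (hlin.fun_div (hlin.sub_const 1) (hden x hx')).Li2 (hg_mem x hx')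
      (div_ne_zero hu0 (hden x hx'))
    have h₂ := hlin.Li2 (hu x hx') hu0
    have h₃ := (((hlin.const_sub 1).clog_real (hu x hx')).fun_pow 2).div_const 2
    refine ((h₁.add h₂).add h₃).congr_deriv ?_
    have := hden x hx'
    have := slitPlane_ne_zero (hu x hx')
    have := ofReal_ne_zero.2 hx.1.ne'
    rw [hg x hx', log_inv _ (slitPlane_arg_ne_pi (hu x hx'))]
    field_simp
    ring
  have h := eq_of_hasDerivAt_zero zero_le_one (fun x hx => (hcont x hx).continuousWithinAt) hderiv
  simp only [G, ofReal_one, mul_one, ofReal_zero, mul_zero, zero_sub, zero_div, Li2_zero,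
    add_zero, sub_zero, log_one, ne_eq, OfNat.ofNat_ne_zero, not_false_eq_true, zero_pow] at h
  linear_combination h

theorem D2_conj {z : ℂ} (hz : 1 - z ∈ slitPlane) : D2 (conj z) = -D2 z := by
  have harg : arg (1 - conj z) = -arg (1 - z) := by
    rw [show 1 - conj z = conj (1 - z) by simp, arg_conj, if_neg (slitPlane_arg_ne_pi hz)]
  simp only [D2, Li2_conj hz, conj_im, harg, norm_conj]
  ring

theorem D2_div_sub_one {c : ℂ} (hc : 1 - c ∈ slitPlane) : D2 (c / (c - 1)) = -D2 c := by
  rcases eq_or_ne c 0 with rfl | hc0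
  · simp [D2]
  have harg : arg (1 - c / (c - 1)) = -arg (1 - c) := by
    rw [one_sub_div_sub_one (fun h => slitPlane_ne_zero hc (by rw [h, sub_self])), arg_inv,
      if_neg (slitPlane_arg_ne_pi hc)]
  have hlog : Real.log ‖c / (c - 1)‖ = Real.log ‖c‖ - Real.log ‖1 - c‖ := by
    rw [norm_div, norm_sub_rev, Real.log_div (norm_ne_zero_iff.2 hc0)
      (norm_ne_zero_iff.2 (slitPlane_ne_zero hc))]
  have hsq : (log (1 - c) ^ 2 / 2).im = Real.log ‖1 - c‖ * arg (1 - c) := by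
    simp only [pow_two, div_ofNat_im, mul_im, log_re, log_im]
    ring
  simp only [D2, Li2_div_sub_one hc, harg, hlog, sub_im, neg_im, hsq]
  ring

theorem D2_sq {z : ℂ} (hz : |z.re| < 1) : D2 (z ^ 2) = 2 * (D2 z + D2 (-z)) := by
  have h₁ := re_one_sub_pos_of_abs_re_lt_one hz
  have h₂ := re_one_sub_pos_of_abs_re_lt_one (u := -z) (by rwa [neg_re, abs_neg])
  have harg : arg (1 - z ^ 2) = arg (1 - z) + arg (1 - -z) := by
    rw [show 1 - z ^ 2 = (1 - z) * (1 - -z) by ring, ← log_im, log_mul_of_re_pos h₁ h₂, add_im,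
      log_im, log_im]
  have him : (Li2 (z ^ 2)).im = 2 * ((Li2 z).im + (Li2 (-z)).im) := by
    rw [show Li2 (z ^ 2) = 2 * (Li2 z + Li2 (-z)) by rw [Li2_add_Li2_neg hz]; ring]
    simp
  simp only [D2, him, harg, norm_pow, Real.log_pow, norm_neg]
  push_cast
  ring

noncomputable def ζ10 : ℂ := exp (↑(Real.pi / 5) * I)

lemma ζ10_ne_zero : ζ10 ≠ 0 := exp_ne_zero _

lemma norm_ζ10 : ‖ζ10‖ = 1 := norm_exp_ofReal_mul_I _

lemma ζ10_im_ne_zero : ζ10.im ≠ 0 := by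
  rw [ζ10, exp_ofReal_mul_I_im]
  exact (Real.sin_pos_of_pos_of_lt_pi (by positivity) (by linarith [Real.pi_pos])).ne'

lemma ζ10_pow_five : ζ10 ^ 5 = -1 := by
  rw [ζ10, ← exp_nat_mul, ← exp_pi_mul_I]
  push_cast
  ring_nf

lemma ζ5_eq_ζ10_sq : ζ5 = ζ10 ^ 2 := by
  rw [ζ5, ζ10, ← exp_nat_mul]
  push_cast
  ring_nf

lemma goldφ_eq_ζ10_add_conj : goldφ = ζ10 + conj ζ10 := by
  rw [add_conj, ζ10, exp_ofReal_mul_I_re, Real.cos_pi_div_five, goldφ]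
  push_cast
  ring

lemma conj_ζ10 : conj ζ10 = ζ10⁻¹ := (inv_eq_conj norm_ζ10).symm

lemma conj_ζ5_sq : conj (ζ5 ^ 2) = -ζ10 := by
  have h0 := ζ10_ne_zero
  rw [ζ5_eq_ζ10_sq, map_pow, map_pow, conj_ζ10]
  field_simp
  linear_combination ζ10_pow_five

lemma goldφ_mul_ζ5 : goldφ * ζ5 = conj ζ10 / (conj ζ10 - 1) := by
  have h0 := ζ10_ne_zero
  have h1 : 1 - ζ10 ≠ 0 := fun h => ζ10_im_ne_zero (by simp [← sub_eq_zero.1 h])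
  have h2 : ζ10 + 1 ≠ 0 := fun h => ζ10_im_ne_zero (by simp [eq_neg_of_add_eq_zero_left h])
  have hP : ζ10 ^ 4 - ζ10 ^ 3 + ζ10 ^ 2 - ζ10 + 1 = 0 :=
    (mul_eq_zero.1 (by linear_combination ζ10_pow_five : (ζ10 + 1) * _ = 0)).resolve_left h2
  rw [goldφ_eq_ζ10_add_conj, ζ5_eq_ζ10_sq, conj_ζ10]
  field_simp
  linear_combination -hP

theorem stmt_9 : D2 ζ5 + 2 * D2 (ζ5 ^ 2) = 2 * D2 (goldφ * ζ5) := by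
  have him_conj : (conj ζ10).im ≠ 0 := by simpa using ζ10_im_ne_zero
  have him_sq : (ζ5 ^ 2).im ≠ 0 := by
    rw [← conj_conj (ζ5 ^ 2), conj_ζ5_sq]
    simpa using ζ10_im_ne_zero
  have hdup : D2 ζ5 = 2 * (D2 ζ10 + D2 (-ζ10)) := by
    rw [ζ5_eq_ζ10_sq]
    exact D2_sq (norm_ζ10 ▸ abs_re_lt_norm.2 ζ10_im_ne_zero)
  have hneg : D2 (-ζ10) = -D2 (ζ5 ^ 2) := by
    rw [← conj_ζ5_sq, D2_conj (one_sub_mem_slitPlane_of_im_ne_zero him_sq)]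
  have hgold : D2 (goldφ * ζ5) = D2 ζ10 := by
    rw [goldφ_mul_ζ5, D2_div_sub_one (one_sub_mem_slitPlane_of_im_ne_zero him_conj),
      D2_conj (one_sub_mem_slitPlane_of_im_ne_zero ζ10_im_ne_zero), neg_neg]
  rw [hdup, hneg, hgold]
  ring
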